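/- Let a be a minimal automorphism of a spherically homogeneous rooted tree T. Then the centralizer of a in Aut(T) equals the closure of the cyclic group generated by a: any σ ∈ Aut(T) commuting with a lies in the closure of ⟨a⟩. -/

import Mathlib

/-- The boundary of the spherically homogeneous rooted tree with spherical
index `m`: infinite paths are sequences `x` with `x n ∈ {0, …, m n - 1}`. -/
abbrev Bd (m : ℕ → ℕ) : Type := ∀ n : ℕ, Fin (m n)

/-- A permutation of the boundary is a tree automorphism iff it preserves the
relation "agree on the first `N` coordinates" (i.e. it permutes each vertex
level preserving the tree structure). -/
def IsTreeAut {m : ℕ → ℕ} (e : Equiv.Perm (Bd m)) : Prop :=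
  ∀ (N : ℕ) (x y : Bd m), (∀ n < N, x n = y n) ↔ (∀ n < N, e x n = e y n)

/-- The automorphism group of the spherically homogeneous rooted tree with
spherical index `m`, realized as a subgroup of the permutations of the
boundary. -/
def treeAutGroup (m : ℕ → ℕ) : Subgroup (Equiv.Perm (Bd m)) where
  carrier := {e | IsTreeAut e}
  one_mem' := fun _ _ _ => Iff.rfl
  mul_mem' := by
    intro a b ha hb N x y
    exact (hb N x y).trans (ha N (b x) (b y))
  inv_mem' := by
    intro a ha N x y
    have h := ha N (a⁻¹ x) (a⁻¹ y)
    simpa [Equiv.apply_symm_apply] using h.symm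

/-- The orbit of `x` under the cyclic group generated by `a`. -/
def orbitZ {m : ℕ → ℕ} (a : Equiv.Perm (Bd m)) (x : Bd m) : Set (Bd m) :=
  {y | ∃ k : ℤ, (a ^ k) x = y}

/-- `a` acts transitively on every vertex level `V n` (vertices at level `n`
are identified with length-`n` prefixes of boundary points). -/
def LevelTransitive {m : ℕ → ℕ} (a : Equiv.Perm (Bd m)) : Prop :=
  ∀ (n : ℕ) (x y : Bd m), ∃ k : ℤ, ∀ i < n, ((a ^ k) x) i = y i

/-- `f` belongs to the closure of the set `Γ` of tree automorphisms in the
profinite (= uniform) topology on `Aut(T)`: for every level `n` there is an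
element of `Γ` agreeing with `f` up to level `n` everywhere. -/
def InClosure {m : ℕ → ℕ} (Γ : Set (Equiv.Perm (Bd m))) (f : Bd m → Bd m) : Prop :=
  ∀ n : ℕ, ∃ g ∈ Γ, ∀ x : Bd m, ∀ i < n, f x i = g x i

/-!
On each level `n`, an automorphism `σ` commuting with the level-transitive `a` is determined by
the image of a single vertex `v`: every other vertex is `aʲ v`, and `σ (aʲ v) = aʲ (σ v)`.
Hence `σ` agrees on level `n` with the power `aᵏ` sending `v` to `σ v`. Conversely, commuting with
`a` is a closed condition because `a` is continuous, so it passes from `⟨a⟩` to its closure.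
-/

open Equiv

variable {m : ℕ → ℕ}

def AgreeUpTo (N : ℕ) (x y : Bd m) : Prop :=
  ∀ n < N, x n = y n

namespace AgreeUpTo

variable {N : ℕ} {x y z : Bd m}

theorem symm (h : AgreeUpTo N x y) : AgreeUpTo N y x :=
  fun n hn => (h n hn).symm

theorem trans (hxy : AgreeUpTo N x y) (hyz : AgreeUpTo N y z) : AgreeUpTo N x z :=
  fun n hn => (hxy n hn).trans (hyz n hn)

end AgreeUpTo

theorem IsTreeAut.agreeUpTo_apply {e : Perm (Bd m)} (he : IsTreeAut e) {N : ℕ} {x y : Bd m}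
    (h : AgreeUpTo N x y) : AgreeUpTo N (e x) (e y) :=
  (he N x y).mp h

theorem isTreeAut_zpow {a : Perm (Bd m)} (ha : a ∈ treeAutGroup m) (k : ℤ) :
    IsTreeAut (a ^ k) :=
  (treeAutGroup m).zpow_mem ha k

theorem agreeUpTo_apply_self_of_commute {a τ : Perm (Bd m)} (ha : a ∈ treeAutGroup m)
    (hmin : LevelTransitive a) (hτ : τ ∈ treeAutGroup m) (hcomm : Commute τ a)
    {N : ℕ} {v : Bd m} (hv : AgreeUpTo N (τ v) v) (x : Bd m) : AgreeUpTo N (τ x) x := by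
  obtain ⟨j, hj⟩ : ∃ j : ℤ, AgreeUpTo N ((a ^ j) v) x := hmin N v x
  have hτa : τ ((a ^ j) v) = (a ^ j) (τ v) := congrArg (· v) (hcomm.zpow_right j).eq
  have hshift : AgreeUpTo N (τ ((a ^ j) v)) ((a ^ j) v) :=
    hτa ▸ (isTreeAut_zpow ha j).agreeUpTo_apply hv
  exact (hτ.agreeUpTo_apply hj.symm).trans (hshift.trans hj)

theorem inClosure_zpowers_of_commute {a σ : Perm (Bd m)} (ha : a ∈ treeAutGroup m)
    (hmin : LevelTransitive a) (hσ : σ ∈ treeAutGroup m) (hcomm : Commute σ a) :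
    InClosure (Subgroup.zpowers a : Set (Perm (Bd m))) σ := by
  intro N
  rcases isEmpty_or_nonempty (Bd m) with _ | ⟨⟨v⟩⟩
  · exact ⟨1, Subgroup.one_mem _, fun x => isEmptyElim x⟩
  obtain ⟨k, hk⟩ : ∃ k : ℤ, AgreeUpTo N ((a ^ k) v) (σ v) := hmin N v (σ v)
  refine ⟨a ^ k, Subgroup.zpow_mem_zpowers a k, fun x => ?_⟩
  show AgreeUpTo N (σ x) ((a ^ k) x)
  -- `τ = σ a⁻ᵏ` commutes with `a` and fixes the level-`N` vertex of `aᵏ v`, hence fixes level `N`.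
  set τ := σ * (a ^ k)⁻¹
  have hτ : τ ∈ treeAutGroup m :=
    mul_mem hσ (inv_mem ((treeAutGroup m).zpow_mem ha k))
  have hτcomm : Commute τ a := hcomm.mul_left ((Commute.refl a).zpow_left k).inv_left
  have hτv : τ ((a ^ k) v) = σ v := by simp [τ]
  have hτx : τ ((a ^ k) x) = σ x := by simp [τ]
  rw [← hτx]
  exact agreeUpTo_apply_self_of_commute ha hmin hτ hτcomm (hτv ▸ hk.symm) ((a ^ k) x)

theorem comp_eq_comp_of_inClosure {a : Perm (Bd m)} (ha : a ∈ treeAutGroup m)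
    {Γ : Set (Perm (Bd m))} (hΓ : ∀ g ∈ Γ, Commute g a) {f : Bd m → Bd m}
    (hf : InClosure Γ f) : f ∘ a = a ∘ f := by
  funext x i
  obtain ⟨g, hg, hfg⟩ := hf (i + 1)
  have hga : g (a x) = a (g x) := congrArg (· x) (hΓ g hg).eq
  have hgf : AgreeUpTo (i + 1) (a (g x)) (a (f x)) :=
    IsTreeAut.agreeUpTo_apply ha fun j hj => (hfg x j hj).symm
  calc f (a x) i = g (a x) i := hfg (a x) i i.lt_succ_self
    _ = a (f x) i := hga ▸ hgf i i.lt_succ_self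

theorem settled_stmt9_general {m : ℕ → ℕ}
    (a : Equiv.Perm (Bd m)) (ha : a ∈ treeAutGroup m) (hamin : LevelTransitive a) :
    (∀ σ : Equiv.Perm (Bd m), σ ∈ treeAutGroup m → σ * a = a * σ →
      InClosure ((Subgroup.zpowers a : Subgroup (Equiv.Perm (Bd m))) : Set (Equiv.Perm (Bd m))) ⇑σ) ∧
    (∀ f : Bd m → Bd m,
      InClosure ((Subgroup.zpowers a : Subgroup (Equiv.Perm (Bd m))) : Set (Equiv.Perm (Bd m))) f →
      f ∘ ⇑a = ⇑a ∘ f) := by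
  refine ⟨fun σ hσ hcomm => inClosure_zpowers_of_commute ha hamin hσ hcomm,
    fun f => comp_eq_comp_of_inClosure ha ?_⟩
  rintro g ⟨k, rfl⟩
  exact (Commute.refl a).zpow_left k

/-- Let `a` be a minimal automorphism of a spherically homogeneous rooted
tree. Then the centralizer of `a` in `Aut(T)` equals the closure of the
cyclic group `⟨a⟩`: every `σ ∈ Aut(T)` commuting with `a` lies in the
closure of `⟨a⟩`, and conversely every element of the closure of `⟨a⟩`
commutes with `a`. -/
theorem settled_stmt9 {m : ℕ → ℕ} (hm : ∀ n, 2 ≤ m n)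
    (a : Equiv.Perm (Bd m)) (ha : a ∈ treeAutGroup m) (hamin : LevelTransitive a) :
    (∀ σ : Equiv.Perm (Bd m), σ ∈ treeAutGroup m → σ * a = a * σ →
      InClosure ((Subgroup.zpowers a : Subgroup (Equiv.Perm (Bd m))) : Set (Equiv.Perm (Bd m))) ⇑σ) ∧
    (∀ f : Bd m → Bd m,
      InClosure ((Subgroup.zpowers a : Subgroup (Equiv.Perm (Bd m))) : Set (Equiv.Perm (Bd m))) f →
      f ∘ ⇑a = ⇑a ∘ f) :=
  settled_stmt9_general a ha hamin
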